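/- arXiv:2310.10582 — 2 statements merged into one kernel-verified Lean document; each statement's English description precedes it below -/
import Mathlib

section
/- (Finite-dimensional form of Proposition 7(5): 𝒰*·Δ_{ω_{−t}|ω}·𝒰 = Δ_{ω_t|ω}.) Suppose U is a unitary matrix with U·conj(U) = 1, U·conj(H)·U* = H and U·conj(ω)·U* = ω. Then for every t ∈ ℝ and every matrix X ∈ Matrix n n ℂ: U · conj( ω_{−t} · (U·conj(X)·U*) · ω^{−1} ) · U* = ω_t · X · ω^{−1}, where the antiunitary 𝒰 : X ↦ U·conj(X)·U* implements time reversal and Δ_{ν|ρ} acts on matrices by X ↦ ν·X·ρ^{−1}. -/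
open Matrix NormedSpace
open scoped ComplexOrder

/-!
Time reversal `𝒰 X = U * conj X * Uᴴ` is a continuous ring automorphism of the matrix algebra
(multiplicative since `Uᴴ * U = 1`, involutive since `U * conj U = 1`), so it commutes with `exp`
and with matrix inversion; being conjugate-linear and fixing `H`, it sends `exp (i t H)` to
`exp (-i t H)`. As it also fixes `ω`, it maps `ω_{-t} * 𝒰 X * ω⁻¹` to
`ω_t * 𝒰 (𝒰 X) * ω⁻¹ = ω_t * X * ω⁻¹`.
-/

theorem map_ringInverse {M₀ N₀ F : Type*} [MonoidWithZero M₀] [MonoidWithZero N₀]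
    [EquivLike F M₀ N₀] [MulEquivClass F M₀ N₀] (e : F) (a : M₀) :
    e (Ring.inverse a) = Ring.inverse (e a) := by
  by_cases ha : IsUnit a
  · obtain ⟨u, rfl⟩ := ha
    simpa [Ring.inverse_unit] using (Ring.inverse_unit (Units.map (e : M₀ →* N₀) u)).symm
  · rw [Ring.inverse_non_unit a ha, map_zero, Ring.inverse_non_unit]
    rwa [isUnit_map_iff]

namespace Matrix

variable {n : Type*} [Fintype n] [DecidableEq n]

def antiunitaryConj (U X : Matrix n n ℂ) : Matrix n n ℂ :=
  U * (starRingEnd ℂ).mapMatrix X * Uᴴ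

variable {U : Matrix n n ℂ}

theorem antiunitaryConj_antiunitaryConj (hUc : U * U.map (starRingEnd ℂ) = 1)
    (X : Matrix n n ℂ) : antiunitaryConj U (antiunitaryConj U X) = X := by
  have hUcH : Uᴴ.map (starRingEnd ℂ) * Uᴴ = 1 := by
    rw [conjTranspose_map (starRingEnd ℂ) (fun _ => rfl), ← conjTranspose_mul, hUc,
      conjTranspose_one]
  have hXcc : X.map (starRingEnd ℂ ∘ starRingEnd ℂ) = X := by
    ext; simp
  calc antiunitaryConj U (antiunitaryConj U X)
      = (U * U.map (starRingEnd ℂ)) * X.map (starRingEnd ℂ ∘ starRingEnd ℂ) *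
          (Uᴴ.map (starRingEnd ℂ) * Uᴴ) := by
        simp only [antiunitaryConj, map_mul, RingHom.mapMatrix_apply, Matrix.map_map,
          Matrix.mul_assoc]
    _ = X := by rw [hUc, hUcH, hXcc, Matrix.one_mul, Matrix.mul_one]

theorem antiunitaryConj_mul (hU : Uᴴ * U = 1) (A B : Matrix n n ℂ) :
    antiunitaryConj U (A * B) = antiunitaryConj U A * antiunitaryConj U B := by
  simp only [antiunitaryConj, map_mul, Matrix.mul_assoc]
  rw [← Matrix.mul_assoc Uᴴ U, hU, Matrix.one_mul]

theorem antiunitaryConj_add (U A B : Matrix n n ℂ) :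
    antiunitaryConj U (A + B) = antiunitaryConj U A + antiunitaryConj U B := by
  simp only [antiunitaryConj, map_add, Matrix.mul_add, Matrix.add_mul]

theorem antiunitaryConj_smul (U : Matrix n n ℂ) (s : ℂ) (A : Matrix n n ℂ) :
    antiunitaryConj U (s • A) = starRingEnd ℂ s • antiunitaryConj U A := by
  simp only [antiunitaryConj, RingHom.mapMatrix_apply, map_smul' _ s A (map_mul _),
    Matrix.mul_smul, Matrix.smul_mul]

theorem continuous_antiunitaryConj (U : Matrix n n ℂ) : Continuous (antiunitaryConj U) :=
  (continuous_const.matrix_mul (continuous_id.matrix_map Complex.continuous_conj)).matrix_mul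
    continuous_const

def antiunitaryConjRingEquiv (hU : Uᴴ * U = 1) (hUc : U * U.map (starRingEnd ℂ) = 1) :
    Matrix n n ℂ ≃+* Matrix n n ℂ where
  toFun := antiunitaryConj U
  invFun := antiunitaryConj U
  left_inv := antiunitaryConj_antiunitaryConj hUc
  right_inv := antiunitaryConj_antiunitaryConj hUc
  map_mul' := antiunitaryConj_mul hU
  map_add' := antiunitaryConj_add U

theorem antiunitaryConj_inv (hU : Uᴴ * U = 1) (hUc : U * U.map (starRingEnd ℂ) = 1)
    (A : Matrix n n ℂ) : antiunitaryConj U A⁻¹ = (antiunitaryConj U A)⁻¹ := by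
  rw [nonsing_inv_eq_ringInverse, nonsing_inv_eq_ringInverse]
  exact map_ringInverse (antiunitaryConjRingEquiv hU hUc) A

theorem antiunitaryConj_exp (hU : Uᴴ * U = 1) (hUc : U * U.map (starRingEnd ℂ) = 1)
    (A : Matrix n n ℂ) : antiunitaryConj U (exp A) = exp (antiunitaryConj U A) := by
  open scoped Norms.Operator in
  exact map_exp (antiunitaryConjRingEquiv hU hUc) (continuous_antiunitaryConj U) A

end Matrix

theorem time_reversal_relative_modular_general
    {n : Type*} [Fintype n] [DecidableEq n]
    (H : Matrix n n ℂ)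
    (ω : Matrix n n ℂ)
    (U : Matrix n n ℂ) (hU2 : Uᴴ * U = 1)
    (hUc : U * U.map (starRingEnd ℂ) = 1)
    (hUH : U * H.map (starRingEnd ℂ) * Uᴴ = H)
    (hUω : U * ω.map (starRingEnd ℂ) * Uᴴ = ω)
    (t : ℝ) (X : Matrix n n ℂ) :
    U *
        ((exp ((Complex.I * t) • H) * ω * exp ((-(Complex.I * t)) • H)) *
            (U * X.map (starRingEnd ℂ) * Uᴴ) * ω⁻¹).map (starRingEnd ℂ) *
        Uᴴ =
      (exp ((-(Complex.I * t)) • H) * ω * exp ((Complex.I * t) • H)) * X * ω⁻¹ := by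
  have hH' : antiunitaryConj U H = H := hUH
  have hω' : antiunitaryConj U ω = ω := hUω
  have hIt : starRingEnd ℂ (Complex.I * t) = -(Complex.I * t) := by simp
  change antiunitaryConj U (exp ((Complex.I * t) • H) * ω * exp ((-(Complex.I * t)) • H) *
    antiunitaryConj U X * ω⁻¹) = _
  simp only [antiunitaryConj_mul hU2, antiunitaryConj_antiunitaryConj hUc,
    antiunitaryConj_inv hU2 hUc, antiunitaryConj_exp hU2 hUc, antiunitaryConj_smul, hH', hω', hIt,
    map_neg, neg_neg]

theorem time_reversal_relative_modular
    {n : Type*} [Fintype n] [DecidableEq n] [Nonempty n]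
    (H : Matrix n n ℂ) (hH : H.IsHermitian)
    (ω : Matrix n n ℂ) (hω : ω.PosDef) (hωtr : ω.trace = 1)
    (U : Matrix n n ℂ) (hU1 : U * Uᴴ = 1) (hU2 : Uᴴ * U = 1)
    (hUc : U * U.map (starRingEnd ℂ) = 1)
    (hUH : U * H.map (starRingEnd ℂ) * Uᴴ = H)
    (hUω : U * ω.map (starRingEnd ℂ) * Uᴴ = ω)
    (t : ℝ) (X : Matrix n n ℂ) :
    U *
        ((exp ((Complex.I * t) • H) * ω * exp ((-(Complex.I * t)) • H)) *
            (U * X.map (starRingEnd ℂ) * Uᴴ) * ω⁻¹).map (starRingEnd ℂ) *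
        Uᴴ =
      (exp ((-(Complex.I * t)) • H) * ω * exp ((Complex.I * t) • H)) * X * ω⁻¹ :=
  time_reversal_relative_modular_general H ω U hU2 hUc hUH hUω t X
end

section
/- (Finite-dimensional analog of Theorem 4(2), estimates (est-1) and (est-2).) In the bipartite setup, let ν_S be a density matrix on Matrix n_S n_S ℂ and set ν = ν_S ⊗ ω_R. Then for every t ∈ ℝ and all a, b ∈ 𝒜: p_{ν,t}(b,a) ≤ N · p_{ω,t}(b,a) (as nonnegative reals); and if moreover there is γ > 0 such that ν_S − γ·1 is positive semidefinite, then γ·N · p_{ω,t}(b,a) ≤ p_{ν,t}(b,a). -/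
open Matrix NormedSpace
open scoped ComplexOrder

noncomputable section

/-- The two-times measurement statistics
`p_{ν,t}(b,a) = trace(exp(−itH)·P_a·ν·P_a·exp(itH)·P_b)`. -/
def ttm {n 𝒜 : Type*} [Fintype n] [DecidableEq n]
    (H : Matrix n n ℂ) (P : 𝒜 → Matrix n n ℂ) (ν : Matrix n n ℂ) (t : ℝ) (b a : 𝒜) : ℂ :=
  (exp ((-(Complex.I * t)) • H) * P a * ν * P a * exp ((Complex.I * t) • H) * P b).trace

/-- The complex power `ω^z = ∑_a λ_a^z · P_a` of `ω = ∑_a λ_a · P_a`. -/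
def omegaPow {n 𝒜 : Type*} [Fintype 𝒜] (lam : 𝒜 → ℝ) (P : 𝒜 → Matrix n n ℂ) (z : ℂ) :
    Matrix n n ℂ :=
  ∑ a, ((lam a : ℂ) ^ z) • P a

/-- The pinching `ν̄ = ∑_a P_a·ν·P_a`. -/
def pinch {n 𝒜 : Type*} [Fintype n] [Fintype 𝒜]
    (P : 𝒜 → Matrix n n ℂ) (ν : Matrix n n ℂ) : Matrix n n ℂ :=
  ∑ a, P a * ν * P a

/-! `p_{ν,t}(b,a) = tr(W ν Wᴴ)` with `W = P_b e^{-itH} P_a`, so `ν ↦ p_{ν,t}(b,a)` is a positive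
linear functional and both estimates are Loewner-order inequalities in `ν`:
`γ • 1 ≤ ν_S ≤ 1` (a density matrix has eigenvalues at most its trace) gives
`γ N ω = (γ • 1) ⊗ ω_R ≤ ν_S ⊗ ω_R ≤ 1 ⊗ ω_R = N ω`, as `ω_R ≥ 0`. -/

open Kronecker
open scoped MatrixOrder

namespace Matrix

variable {m n 𝕜 : Type*} [Fintype m] [Fintype n] [RCLike 𝕜]

lemma IsHermitian.conjTranspose_exp_smul [DecidableEq n] {H : Matrix n n 𝕜}
    (hH : H.IsHermitian) (z : 𝕜) :
    (NormedSpace.exp (z • H))ᴴ = NormedSpace.exp (star z • H) := by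
  rw [← exp_conjTranspose, conjTranspose_smul, hH.eq]

lemma PosSemidef.le_one_of_trace_eq_one [DecidableEq n] {ν : Matrix n n 𝕜}
    (hν : ν.PosSemidef) (htr : ν.trace = 1) : ν ≤ 1 := by
  refine (CFC.le_one_iff (R := ℝ) ν hν.isHermitian.isSelfAdjoint).mpr fun x hx => ?_
  obtain ⟨i, rfl⟩ := hν.isHermitian.spectrum_real_eq_range_eigenvalues ▸ hx
  have hsum : ∑ j, hν.isHermitian.eigenvalues j = 1 := by
    simpa using congrArg RCLike.re (hν.isHermitian.trace_eq_sum_eigenvalues.symm.trans htr)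
  exact hsum ▸ Finset.single_le_sum (fun j _ => hν.eigenvalues_nonneg j) (Finset.mem_univ i)

lemma kronecker_le_kronecker_left {X Y : Matrix m m 𝕜} {R : Matrix n n 𝕜} (hXY : X ≤ Y)
    (hR : 0 ≤ R) : X ⊗ₖ R ≤ Y ⊗ₖ R := by
  have hsub : Y ⊗ₖ R - X ⊗ₖ R = (Y - X) ⊗ₖ R := by
    ext
    simp [sub_mul]
  rw [le_iff, hsub]
  exact hXY.kronecker (nonneg_iff_posSemidef.mp hR)

end Matrix

lemma IsStarProjection.kronecker {m n 𝕜 : Type*} [Fintype m] [Fintype n] [RCLike 𝕜]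
    {p : Matrix m m 𝕜} {q : Matrix n n 𝕜} (hp : IsStarProjection p)
    (hq : IsStarProjection q) : IsStarProjection (p ⊗ₖ q) where
  isIdempotentElem := by
    rw [IsIdempotentElem, ← Matrix.mul_kronecker_mul, hp.isIdempotentElem.eq,
      hq.isIdempotentElem.eq]
  isSelfAdjoint := by
    rw [IsSelfAdjoint, Matrix.star_eq_conjTranspose, Matrix.conjTranspose_kronecker,
      hp.isSelfAdjoint.isHermitian.eq, hq.isSelfAdjoint.isHermitian.eq]

section TwoTimesMeasurement

variable {n 𝒜 : Type*} [Fintype n] [DecidableEq n]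

lemma ttm_smul (H : Matrix n n ℂ) (P : 𝒜 → Matrix n n ℂ) (c : ℂ) (ν : Matrix n n ℂ) (t : ℝ)
    (b a : 𝒜) : ttm H P (c • ν) t b a = c * ttm H P ν t b a := by
  simp only [ttm, Matrix.mul_smul, Matrix.smul_mul, Matrix.trace_smul, smul_eq_mul]

lemma ttm_eq_trace_mul_mul_conjTranspose {H : Matrix n n ℂ} (hH : H.IsHermitian)
    {P : 𝒜 → Matrix n n ℂ} {a b : 𝒜} (ha : (P a).IsHermitian) (hb : IsStarProjection (P b))
    (ν : Matrix n n ℂ) (t : ℝ) :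
    ttm H P ν t b a =
      (P b * exp ((-(Complex.I * t)) • H) * P a * ν *
        (P b * exp ((-(Complex.I * t)) • H) * P a)ᴴ).trace := by
  have hU : (exp ((-(Complex.I * t)) • H))ᴴ = exp ((Complex.I * t) • H) := by
    rw [hH.conjTranspose_exp_smul]
    simp
  simp only [ttm, Matrix.conjTranspose_mul, ha.eq, hb.isSelfAdjoint.isHermitian.eq, hU,
    Matrix.mul_assoc]
  rw [Matrix.trace_mul_comm (P b)]
  simp only [Matrix.mul_assoc, hb.isIdempotentElem.eq]

lemma ttm_mono {H : Matrix n n ℂ} (hH : H.IsHermitian) {P : 𝒜 → Matrix n n ℂ} {a b : 𝒜}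
    (ha : (P a).IsHermitian) (hb : IsStarProjection (P b)) (t : ℝ) {ν₁ ν₂ : Matrix n n ℂ}
    (hν : ν₁ ≤ ν₂) : ttm H P ν₁ t b a ≤ ttm H P ν₂ t b a := by
  set W := P b * exp ((-(Complex.I * t)) • H) * P a
  have h : 0 ≤ (W * (ν₂ - ν₁) * Wᴴ).trace := (hν.mul_mul_conjTranspose_same W).trace_nonneg
  rw [Matrix.mul_sub, Matrix.sub_mul, Matrix.trace_sub, sub_nonneg] at h
  rwa [ttm_eq_trace_mul_mul_conjTranspose hH ha hb, ttm_eq_trace_mul_mul_conjTranspose hH ha hb]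

end TwoTimesMeasurement

open Kronecker in
theorem bipartite_2TMEP_estimates_general
    {nS nR 𝒜 : Type*} [Fintype nS] [DecidableEq nS] [Nonempty nS]
    [Fintype nR] [DecidableEq nR]
    [Fintype 𝒜]
    (H : Matrix (nS × nR) (nS × nR) ℂ) (hH : H.IsHermitian)
    (PR : 𝒜 → Matrix nR nR ℂ)
    (hPherm : ∀ a, (PR a).IsHermitian)
    (hPidem : ∀ a, PR a * PR a = PR a)
    (μ : 𝒜 → ℝ) (hμpos : ∀ a, 0 < μ a)
    (νS : Matrix nS nS ℂ) (hνS : νS.PosSemidef) (hνStr : νS.trace = 1)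
    (t : ℝ) (a b : 𝒜) :
    (ttm H (fun c => (1 : Matrix nS nS ℂ) ⊗ₖ PR c)
        (νS ⊗ₖ (∑ c, (μ c : ℂ) • PR c)) t b a).re ≤
      (Fintype.card nS : ℝ) *
        (ttm H (fun c => (1 : Matrix nS nS ℂ) ⊗ₖ PR c)
          (((Fintype.card nS : ℂ))⁻¹ • ((1 : Matrix nS nS ℂ) ⊗ₖ (∑ c, (μ c : ℂ) • PR c)))
          t b a).re ∧
    ∀ γ : ℝ, 0 < γ → (νS - (γ : ℂ) • 1).PosSemidef →
      γ * (Fintype.card nS : ℝ) *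
          (ttm H (fun c => (1 : Matrix nS nS ℂ) ⊗ₖ PR c)
            (((Fintype.card nS : ℂ))⁻¹ • ((1 : Matrix nS nS ℂ) ⊗ₖ (∑ c, (μ c : ℂ) • PR c)))
            t b a).re ≤
        (ttm H (fun c => (1 : Matrix nS nS ℂ) ⊗ₖ PR c)
          (νS ⊗ₖ (∑ c, (μ c : ℂ) • PR c)) t b a).re := by
  have hPR : ∀ c, IsStarProjection (PR c) := fun c => ⟨hPidem c, hPherm c⟩
  have hωR : 0 ≤ ∑ c, (μ c : ℂ) • PR c :=
    Finset.sum_nonneg fun c _ => smul_nonneg (by exact_mod_cast (hμpos c).le) (hPR c).nonneg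
  have hP : ∀ c, IsStarProjection ((1 : Matrix nS nS ℂ) ⊗ₖ PR c) :=
    fun c => (IsStarProjection.one _).kronecker (hPR c)
  have mono : ∀ {ν₁ ν₂}, ν₁ ≤ ν₂ →
      (ttm H (fun c => (1 : Matrix nS nS ℂ) ⊗ₖ PR c) ν₁ t b a).re ≤
        (ttm H (fun c => (1 : Matrix nS nS ℂ) ⊗ₖ PR c) ν₂ t b a).re :=
    fun h => Complex.re_le_re (ttm_mono hH (hP a).isSelfAdjoint.isHermitian (hP b) t h)
  have hN : (Fintype.card nS : ℝ) ≠ 0 := Nat.cast_ne_zero.mpr Fintype.card_ne_zero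
  rw [ttm_smul, ← Complex.ofReal_natCast, ← Complex.ofReal_inv, Complex.re_ofReal_mul]
  simp only [mul_assoc, mul_inv_cancel_left₀ hN]
  refine ⟨mono (Matrix.kronecker_le_kronecker_left (hνS.le_one_of_trace_eq_one hνStr) hωR),
    fun γ _ hγ => ?_⟩
  have hγν := mono (Matrix.kronecker_le_kronecker_left (Matrix.le_iff.mpr hγ) hωR)
  rwa [Matrix.smul_kronecker, ttm_smul, Complex.re_ofReal_mul] at hγν

open Kronecker in
theorem bipartite_2TMEP_estimates
    {nS nR 𝒜 : Type*} [Fintype nS] [DecidableEq nS] [Nonempty nS]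
    [Fintype nR] [DecidableEq nR] [Nonempty nR]
    [Fintype 𝒜] [DecidableEq 𝒜] [Nonempty 𝒜]
    (H : Matrix (nS × nR) (nS × nR) ℂ) (hH : H.IsHermitian)
    (PR : 𝒜 → Matrix nR nR ℂ)
    (hPherm : ∀ a, (PR a).IsHermitian)
    (hPidem : ∀ a, PR a * PR a = PR a)
    (hPne : ∀ a, PR a ≠ 0)
    (hPorth : ∀ a b, a ≠ b → PR a * PR b = 0)
    (hPsum : ∑ a, PR a = 1)
    (μ : 𝒜 → ℝ) (hμpos : ∀ a, 0 < μ a) (hμinj : Function.Injective μ)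
    (hωRtr : (∑ a, (μ a : ℂ) • PR a).trace = 1)
    (νS : Matrix nS nS ℂ) (hνS : νS.PosSemidef) (hνStr : νS.trace = 1)
    (t : ℝ) (a b : 𝒜) :
    (ttm H (fun c => (1 : Matrix nS nS ℂ) ⊗ₖ PR c)
        (νS ⊗ₖ (∑ c, (μ c : ℂ) • PR c)) t b a).re ≤
      (Fintype.card nS : ℝ) *
        (ttm H (fun c => (1 : Matrix nS nS ℂ) ⊗ₖ PR c)
          (((Fintype.card nS : ℂ))⁻¹ • ((1 : Matrix nS nS ℂ) ⊗ₖ (∑ c, (μ c : ℂ) • PR c)))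
          t b a).re ∧
    ∀ γ : ℝ, 0 < γ → (νS - (γ : ℂ) • 1).PosSemidef →
      γ * (Fintype.card nS : ℝ) *
          (ttm H (fun c => (1 : Matrix nS nS ℂ) ⊗ₖ PR c)
            (((Fintype.card nS : ℂ))⁻¹ • ((1 : Matrix nS nS ℂ) ⊗ₖ (∑ c, (μ c : ℂ) • PR c)))
            t b a).re ≤
        (ttm H (fun c => (1 : Matrix nS nS ℂ) ⊗ₖ PR c)
          (νS ⊗ₖ (∑ c, (μ c : ℂ) • PR c)) t b a).re :=
  bipartite_2TMEP_estimates_general H hH PR hPherm hPidem μ hμpos νS hνS hνStr t a b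
end
end
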